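/- Let ρ_AB be a bipartite density operator on H_A ⊗ H_B (finite-dimensional), and let {M_k} be an informationally complete POVM on H_A with all outcome probabilities p_k = Tr[(M_k ⊗ I) ρ_AB] positive. If all conditional states ρ_{B|k} = Tr_A[(M_k ⊗ I) ρ_AB]/p_k pairwise commute, then ρ_AB can be written in the zero-discord form ρ_AB = Σ_j σ_j ⊗ |j⟩⟨j| for some orthonormal basis {|j⟩} of H_B and positive semidefinite operators σ_j on H_A. -/

import Mathlib

open Matrix Kronecker
open scoped ComplexOrder

/-- Partial trace over the first (A) factor. -/
noncomputable def ptraceA {nA nB : ℕ}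
    (M : Matrix (Fin nA × Fin nB) (Fin nA × Fin nB) ℂ) :
    Matrix (Fin nB) (Fin nB) ℂ :=
  fun j j' => ∑ i : Fin nA, M (i, j) (i, j')

/-- Rank-one outer product |v⟩⟨v|. -/
noncomputable def outer {n : ℕ} (v : Fin n → ℂ) : Matrix (Fin n) (Fin n) ℂ :=
  fun i i' => v i * star (v i')

/-- An orthonormal family of vectors. -/
def OrthonormalFam {n m : ℕ} (v : Fin m → Fin n → ℂ) : Prop :=
  ∀ j j', (∑ i, star (v j i) * v j' i) = if j = j' then 1 else 0

/-! The unnormalised conditional states `S_k = Tr_A[(M_k ⊗ 1) ρ]` are Hermitian and commute, so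
they have a common orthonormal eigenbasis `(w_j)`. For `j ≠ j'` the operator `⟨w_j| ρ |w_j'⟩` on `A`
satisfies `Tr[M_k ⟨w_j| ρ |w_j'⟩] = ⟨w_j| S_k |w_j'⟩ = 0` for every `k`, and since the `M_k` span
all operators on `A` it vanishes. Expanding `ρ` in the basis `(w_j)` of `B` then leaves only the
diagonal blocks `σ_j = ⟨w_j| ρ |w_j⟩`, which are positive semidefinite. -/

theorem LinearMap.IsSymmetric.exists_orthonormalBasis_forall_apply_eq_smul {𝕜 E ι : Type*}
    [RCLike 𝕜] [NormedAddCommGroup E] [InnerProductSpace 𝕜 E] [FiniteDimensional 𝕜 E] {n : ℕ}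
    (hn : Module.finrank 𝕜 E = n) {T : ι → E →ₗ[𝕜] E} (hT : ∀ i, (T i).IsSymmetric)
    (hC : Pairwise (Function.onFun Commute T)) :
    ∃ b : OrthonormalBasis (Fin n) 𝕜 E, ∀ j i, ∃ μ : 𝕜, T i (b j) = μ • b j := by
  classical
  set V : (ι → 𝕜) → Submodule 𝕜 E := fun γ => ⨅ i, Module.End.eigenspace (T i) (γ i)
  have hV : DirectSum.IsInternal V := directSum_isInternal_of_pairwise_commute hT hC
  let _ : Fintype {γ // V γ ≠ ⊥} := hV.submodule_iSupIndep.fintypeNeBotOfFiniteDimensional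
  have hV' : DirectSum.IsInternal fun γ : {γ // V γ ≠ ⊥} => V γ :=
    DirectSum.isInternal_ne_bot_iff.mpr hV
  have horth := (orthogonalFamily_iInf_eigenspaces hT).comp
    (Subtype.val_injective : Function.Injective (Subtype.val : {γ // V γ ≠ ⊥} → ι → 𝕜))
  refine ⟨hV'.subordinateOrthonormalBasis hn horth,
    fun j i => ⟨(hV'.subordinateOrthonormalBasisIndex hn j horth).1 i, ?_⟩⟩
  have hmem := hV'.subordinateOrthonormalBasis_subordinate hn j horth
  exact Module.End.mem_eigenspace_iff.mp ((Submodule.mem_iInf _).mp hmem i)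

theorem Matrix.exists_orthonormalFam_forall_mulVec_eq_smul {n : ℕ} {ι : Type*}
    {S : ι → Matrix (Fin n) (Fin n) ℂ} (hS : ∀ k, (S k).IsHermitian)
    (hC : Pairwise fun k k' => Commute (S k) (S k')) :
    ∃ w : Fin n → Fin n → ℂ, OrthonormalFam w ∧ ∀ k j, ∃ μ : ℂ, S k *ᵥ w j = μ • w j := by
  set T : ι → Module.End ℂ (EuclideanSpace ℂ (Fin n)) := fun k => toEuclideanLin (S k)
  have hT : ∀ k, (T k).IsSymmetric := fun k => isSymmetric_toEuclideanLin_iff.mpr (hS k)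
  have hTC : Pairwise (Function.onFun Commute T) := fun k k' h => LinearMap.ext fun x => by
    simp only [T, Module.End.mul_apply, toLpLin_apply, mulVec_mulVec, (hC h).eq]
  obtain ⟨b, hb⟩ := LinearMap.IsSymmetric.exists_orthonormalBasis_forall_apply_eq_smul
    finrank_euclideanSpace_fin hT hTC
  refine ⟨fun j => WithLp.ofLp (b j), fun j j' => ?_, fun k j => ?_⟩
  · simpa [PiLp.inner_apply, mul_comm] using orthonormal_iff_ite.mp b.orthonormal j j'
  · obtain ⟨μ, hμ⟩ := hb j k
    exact ⟨μ, by simpa [T] using congrArg WithLp.ofLp hμ⟩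

theorem Matrix.eq_zero_of_span_eq_top_of_trace_mul_eq_zero {R m ι : Type*} [CommRing R]
    [Fintype m] [DecidableEq m] {M : ι → Matrix m m R}
    (hM : Submodule.span R (Set.range M) = ⊤) {C : Matrix m m R} (hC : ∀ k, (M k * C).trace = 0) :
    C = 0 := by
  have hker : Submodule.span R (Set.range M) ≤
      LinearMap.ker (traceLinearMap m R R ∘ₗ LinearMap.mulRight R C) :=
    Submodule.span_le.mpr <| Set.range_subset_iff.mpr hC
  rw [hM] at hker
  exact ext_iff_trace_mul_left.mpr fun X => by simpa using hker Submodule.mem_top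

namespace OrthonormalFam

variable {n : ℕ} {w : Fin n → Fin n → ℂ}

lemma dotProduct_mulVec_eq_zero (hw : OrthonormalFam w) {S : Matrix (Fin n) (Fin n) ℂ}
    {j j' : Fin n} (hjj' : j ≠ j') {μ : ℂ} (hμ : S *ᵥ w j' = μ • w j') :
    star (w j) ⬝ᵥ (S *ᵥ w j') = 0 := by
  rw [hμ, dotProduct_smul, show star (w j) ⬝ᵥ w j' = 0 from (hw j j').trans (if_neg hjj'),
    smul_zero]

lemma sum_outer (hw : OrthonormalFam w) : ∑ j, outer (w j) = 1 := by
  set U : Matrix (Fin n) (Fin n) ℂ := of fun m j => w j m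
  have hU : Uᴴ * U = 1 := by
    ext j j'
    simpa [U, mul_apply, one_apply] using hw j j'
  ext m m'
  have h := congrFun (congrFun (mul_eq_one_comm.mp hU : U * Uᴴ = 1) m) m'
  simpa [U, mul_apply, outer, Matrix.sum_apply] using h

end OrthonormalFam

section Bipartite

variable {nA nB : ℕ}

/-- The isometry `1 ⊗ |u⟩ : ℂ^{nA} → ℂ^{nA} ⊗ ℂ^{nB}`. -/
def oneKronCol (nA : ℕ) (u : Fin nB → ℂ) : Matrix (Fin nA × Fin nB) (Fin nA) ℂ :=
  of fun p a => (1 : Matrix (Fin nA) (Fin nA) ℂ) p.1 a * u p.2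

/-- The operator `⟨u| ρ |v⟩` on the `A` factor. -/
def partialMatrixElem (ρ : Matrix (Fin nA × Fin nB) (Fin nA × Fin nB) ℂ) (u v : Fin nB → ℂ) :
    Matrix (Fin nA) (Fin nA) ℂ :=
  (oneKronCol nA u)ᴴ * ρ * oneKronCol nA v

lemma oneKronCol_mul_mul_conjTranspose (u : Fin nB → ℂ) (σ : Matrix (Fin nA) (Fin nA) ℂ) :
    oneKronCol nA u * σ * (oneKronCol nA u)ᴴ = σ ⊗ₖ outer u := by
  ext ⟨c, m⟩ ⟨a, m'⟩
  simp [oneKronCol, outer, mul_apply, one_apply, apply_ite (starRingEnd ℂ)]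
  ring

lemma OrthonormalFam.sum_oneKronCol_mul_conjTranspose {w : Fin nB → Fin nB → ℂ}
    (hw : OrthonormalFam w) :
    ∑ j, oneKronCol nA (w j) * (oneKronCol nA (w j))ᴴ = 1 := by
  have h : ∀ j, oneKronCol nA (w j) * (oneKronCol nA (w j))ᴴ = 1 ⊗ₖ outer (w j) := fun j => by
    rw [← oneKronCol_mul_mul_conjTranspose, Matrix.mul_one]
  have hB := congrFun₂ hw.sum_outer
  simp only [Matrix.sum_apply] at hB
  ext ⟨c, m⟩ ⟨a, m'⟩
  simp [h, Matrix.sum_apply, hB, one_apply, Prod.ext_iff, ite_and]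

lemma eq_sum_kronecker_outer_of_orthonormalFam {w : Fin nB → Fin nB → ℂ} (hw : OrthonormalFam w)
    {ρ : Matrix (Fin nA × Fin nB) (Fin nA × Fin nB) ℂ}
    (hoff : ∀ j j', j ≠ j' → partialMatrixElem ρ (w j) (w j') = 0) :
    ρ = ∑ j, partialMatrixElem ρ (w j) (w j) ⊗ₖ outer (w j) := by
  calc ρ = (∑ j, oneKronCol nA (w j) * (oneKronCol nA (w j))ᴴ) * ρ *
        ∑ j', oneKronCol nA (w j') * (oneKronCol nA (w j'))ᴴ := by
        rw [hw.sum_oneKronCol_mul_conjTranspose, Matrix.one_mul, Matrix.mul_one]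
    _ = ∑ j, ∑ j', oneKronCol nA (w j) * partialMatrixElem ρ (w j) (w j') *
        (oneKronCol nA (w j'))ᴴ := by
        simp only [partialMatrixElem, Finset.sum_mul, Finset.mul_sum, Matrix.mul_assoc]
        exact Finset.sum_comm
    _ = ∑ j, oneKronCol nA (w j) * partialMatrixElem ρ (w j) (w j) *
        (oneKronCol nA (w j))ᴴ := by
        refine Finset.sum_congr rfl fun j _ => Finset.sum_eq_single j (fun j' _ h => ?_) (by simp)
        rw [hoff j j' (Ne.symm h), Matrix.mul_zero, Matrix.zero_mul]
    _ = _ := by simp only [oneKronCol_mul_mul_conjTranspose]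

lemma ptraceA_kronecker_one_mul_apply (X : Matrix (Fin nA) (Fin nA) ℂ)
    (ρ : Matrix (Fin nA × Fin nB) (Fin nA × Fin nB) ℂ) (m m' : Fin nB) :
    ptraceA ((X ⊗ₖ (1 : Matrix (Fin nB) (Fin nB) ℂ)) * ρ) m m'
      = ∑ i, ∑ a, X i a * ρ (a, m) (i, m') := by
  simp [ptraceA, mul_apply, Fintype.sum_prod_type, one_apply]

lemma isHermitian_ptraceA_kronecker_one_mul {X : Matrix (Fin nA) (Fin nA) ℂ}
    {ρ : Matrix (Fin nA × Fin nB) (Fin nA × Fin nB) ℂ} (hX : X.IsHermitian) (hρ : ρ.IsHermitian) :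
    (ptraceA ((X ⊗ₖ (1 : Matrix (Fin nB) (Fin nB) ℂ)) * ρ)).IsHermitian := by
  ext m m'
  simp only [conjTranspose_apply, ptraceA_kronecker_one_mul_apply, star_sum, star_mul',
    hX.apply, hρ.apply]
  rw [Finset.sum_comm]

lemma partialMatrixElem_apply (ρ : Matrix (Fin nA × Fin nB) (Fin nA × Fin nB) ℂ)
    (u v : Fin nB → ℂ) (c a : Fin nA) :
    partialMatrixElem ρ u v c a = ∑ m, ∑ m', star (u m) * ρ (c, m) (a, m') * v m' := by
  simp [partialMatrixElem, oneKronCol, mul_apply, one_apply, Fintype.sum_prod_type,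
    Finset.sum_mul, apply_ite (starRingEnd ℂ)]
  exact Finset.sum_comm

lemma dotProduct_ptraceA_kronecker_one_mul_mulVec (X : Matrix (Fin nA) (Fin nA) ℂ)
    (ρ : Matrix (Fin nA × Fin nB) (Fin nA × Fin nB) ℂ) (u v : Fin nB → ℂ) :
    star u ⬝ᵥ (ptraceA ((X ⊗ₖ (1 : Matrix (Fin nB) (Fin nB) ℂ)) * ρ) *ᵥ v)
      = (X * partialMatrixElem ρ u v).trace := by
  simp only [dotProduct, mulVec, trace, diag_apply, mul_apply, partialMatrixElem_apply,
    ptraceA_kronecker_one_mul_apply, Finset.mul_sum, Finset.sum_mul, Pi.star_apply]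
  calc _ = ∑ m, ∑ i, ∑ a, ∑ m', X i a * (star (u m) * ρ (a, m) (i, m') * v m') := by
        refine Finset.sum_congr rfl fun m _ => ?_
        rw [Finset.sum_comm]
        refine Finset.sum_congr rfl fun i _ => ?_
        rw [Finset.sum_comm]
        exact Finset.sum_congr rfl fun a _ => Finset.sum_congr rfl fun m' _ => by ring
    _ = _ := by
        rw [Finset.sum_comm]
        exact Finset.sum_congr rfl fun i _ => Finset.sum_comm

end Bipartite

theorem stmt4_general {nA nB : ℕ} {ι : Type*}
    (ρAB : Matrix (Fin nA × Fin nB) (Fin nA × Fin nB) ℂ)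
    (hρAB : ρAB.PosSemidef)
    (M : ι → Matrix (Fin nA) (Fin nA) ℂ)
    (hpsd : ∀ k, (M k).PosSemidef)
    (hIC : Submodule.span ℂ (Set.range M) = ⊤)
    (hpos : ∀ k, 0 < ((M k ⊗ₖ (1 : Matrix (Fin nB) (Fin nB) ℂ)) * ρAB).trace)
    (hcomm : ∀ k k',
      letI ρBk := (((M k ⊗ₖ (1 : Matrix (Fin nB) (Fin nB) ℂ)) * ρAB).trace)⁻¹ •
        ptraceA ((M k ⊗ₖ (1 : Matrix (Fin nB) (Fin nB) ℂ)) * ρAB)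
      letI ρBk' := (((M k' ⊗ₖ (1 : Matrix (Fin nB) (Fin nB) ℂ)) * ρAB).trace)⁻¹ •
        ptraceA ((M k' ⊗ₖ (1 : Matrix (Fin nB) (Fin nB) ℂ)) * ρAB)
      ρBk * ρBk' = ρBk' * ρBk) :
    ∃ (w : Fin nB → Fin nB → ℂ) (σ : Fin nB → Matrix (Fin nA) (Fin nA) ℂ),
      OrthonormalFam w ∧ (∀ j, (σ j).PosSemidef) ∧
      ρAB = ∑ j, (σ j) ⊗ₖ outer (w j) := by
  set S := fun k => ptraceA ((M k ⊗ₖ (1 : Matrix (Fin nB) (Fin nB) ℂ)) * ρAB)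
  have hS : ∀ k, (S k).IsHermitian := fun k =>
    isHermitian_ptraceA_kronecker_one_mul (hpsd k).1 hρAB.1
  have hSC : Pairwise fun k k' => Commute (S k) (S k') := fun k k' _ => by
    have h : Commute _ _ := hcomm k k'
    rwa [Commute.smul_left_iff₀ (inv_ne_zero (hpos k).ne'),
      Commute.smul_right_iff₀ (inv_ne_zero (hpos k').ne')] at h
  obtain ⟨w, hw, heig⟩ := exists_orthonormalFam_forall_mulVec_eq_smul hS hSC
  have hoff : ∀ j j', j ≠ j' → partialMatrixElem ρAB (w j) (w j') = 0 := fun j j' hjj' =>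
    eq_zero_of_span_eq_top_of_trace_mul_eq_zero hIC fun k => by
      obtain ⟨μ, hμ⟩ := heig k j'
      rw [← dotProduct_ptraceA_kronecker_one_mul_mulVec]
      exact hw.dotProduct_mulVec_eq_zero hjj' hμ
  exact ⟨w, fun j => partialMatrixElem ρAB (w j) (w j), hw,
    fun j => hρAB.conjTranspose_mul_mul_same _, eq_sum_kronecker_outer_of_orthonormalFam hw hoff⟩

theorem stmt4 {nA nB : ℕ} {ι : Type*} [Fintype ι]
    (ρAB : Matrix (Fin nA × Fin nB) (Fin nA × Fin nB) ℂ)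
    (hρAB : ρAB.PosSemidef) (hρtr : ρAB.trace = 1)
    (M : ι → Matrix (Fin nA) (Fin nA) ℂ)
    (hpsd : ∀ k, (M k).PosSemidef)
    (hsum : ∑ k, M k = 1)
    (hIC : Submodule.span ℂ (Set.range M) = ⊤)
    (hpos : ∀ k, 0 < ((M k ⊗ₖ (1 : Matrix (Fin nB) (Fin nB) ℂ)) * ρAB).trace)
    (hcomm : ∀ k k',
      letI ρBk := (((M k ⊗ₖ (1 : Matrix (Fin nB) (Fin nB) ℂ)) * ρAB).trace)⁻¹ •
        ptraceA ((M k ⊗ₖ (1 : Matrix (Fin nB) (Fin nB) ℂ)) * ρAB)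
      letI ρBk' := (((M k' ⊗ₖ (1 : Matrix (Fin nB) (Fin nB) ℂ)) * ρAB).trace)⁻¹ •
        ptraceA ((M k' ⊗ₖ (1 : Matrix (Fin nB) (Fin nB) ℂ)) * ρAB)
      ρBk * ρBk' = ρBk' * ρBk) :
    ∃ (w : Fin nB → Fin nB → ℂ) (σ : Fin nB → Matrix (Fin nA) (Fin nA) ℂ),
      OrthonormalFam w ∧ (∀ j, (σ j).PosSemidef) ∧
      ρAB = ∑ j, (σ j) ⊗ₖ outer (w j) :=
  stmt4_general ρAB hρAB M hpsd hIC hpos hcomm
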